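/- arXiv:1208.3915 — 6 statements merged into one kernel-verified Lean document; each statement's English description precedes it below -/
import Mathlib

section
/- (Shapiro convolution) For all natural numbers n, ∑_{j=0}^{n} C_{2j} * C_{2n-2j} = 4^n * C_n, where C_m denotes the m-th Catalan number. -/
/-!
Let `c(x) = ∑ Cₙ xⁿ`, so that `c = 1 + x c²`, and let `P = c(x) + c(-x) = 2 ∑ C₂ⱼ x²ʲ`.
The series `s = 1 - 2x c(x)` and `t = 1 + 2x c(-x)` are square roots of `1 - 4x` and `1 + 4x`
with `t - s = 2xP`; eliminating them gives `P² = 4 + x²P⁴`. Hence `e(y) = ∑ C₂ⱼ yʲ` satisfies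
`e(x²)² = 1 + 4x² e(x²)⁴`, so `e²` solves the equation `f = 1 + 4y f²`, as does `c(4y)`.
Such an equation has only one power series solution, so `e(y)² = c(4y)`; comparing the
coefficients of `yⁿ` is the identity.
-/

open Finset PowerSeries

theorem add_sq_eq_four_add_sq_mul_add_pow_four {R : Type*} [CommRing R] [IsDomain R]
    [CharZero R] {x a b : R} (hx : x ≠ 0) (ha : a = 1 + x * a ^ 2) (hb : b = 1 - x * b ^ 2) :
    (a + b) ^ 2 = 4 + x ^ 2 * (a + b) ^ 4 := by
  have hs : (1 - 2 * x * a) ^ 2 = 1 - 4 * x := by linear_combination (-4 * x) * ha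
  have ht : (1 + 2 * x * b) ^ 2 = 1 + 4 * x := by linear_combination (4 * x) * hb
  have hst : ((1 - 2 * x * a) ^ 2 + (1 + 2 * x * b) ^ 2 - (2 * x * (a + b)) ^ 2) ^ 2
      = 4 * (1 - 2 * x * a) ^ 2 * (1 + 2 * x * b) ^ 2 := by ring
  rw [hs, ht] at hst
  apply mul_left_cancel₀ (mul_ne_zero (by norm_num) (pow_ne_zero 2 hx) : (16 * x ^ 2 : R) ≠ 0)
  linear_combination -hst

namespace PowerSeries

variable {R : Type*} [CommRing R]

theorem eq_of_eq_add_mul_sq {y c f g : R⟦X⟧} (hy : constantCoeff y = 0)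
    (hf : f = c + y * f ^ 2) (hg : g = c + y * g ^ 2) : f = g := by
  have hunit : IsUnit (1 - y * (f + g)) := by simp [isUnit_iff_constantCoeff, hy]
  have hfg : (f - g) * (1 - y * (f + g)) = 0 := by linear_combination hf - hg
  simpa [sub_eq_zero] using hunit.mul_left_eq_zero.mp hfg

theorem self_add_rescale_neg_one (f : R⟦X⟧) :
    f + rescale (-1) f = 2 * expand 2 two_ne_zero (mk fun n ↦ coeff (2 * n) f) := by
  ext m
  rw [show (2 : R⟦X⟧) = C 2 from rfl, coeff_C_mul, map_add, coeff_rescale]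
  rcases Nat.even_or_odd' m with ⟨k, rfl | rfl⟩
  · rw [coeff_expand_mul, coeff_mk, pow_mul]
    ring
  · rw [coeff_expand_of_not_dvd _ _ _ (by omega), pow_succ, pow_mul]
    ring

theorem expand_injective (p : ℕ) (hp : p ≠ 0) :
    Function.Injective (expand p hp : R⟦X⟧ → R⟦X⟧) := by
  intro f g h
  ext n
  rw [← coeff_expand_mul p hp f, h, coeff_expand_mul]

theorem sq_mk_catalan_two_mul :
    (mk fun n ↦ (catalan (2 * n) : ℤ)) ^ 2 = rescale 4 (catalanSeries.map (Nat.castRingHom ℤ)) := by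
  have : CharZero ℤ⟦X⟧ := RingHom.charZero constantCoeff
  set c := catalanSeries.map (Nat.castRingHom ℤ)
  set e : ℤ⟦X⟧ := mk fun n ↦ (catalan (2 * n) : ℤ)
  have hc : c = 1 + X * c ^ 2 := by
    have := congrArg (map (Nat.castRingHom ℤ)) catalanSeries_sq_mul_X_add_one
    rw [map_add, map_mul, map_pow, map_X, map_one] at this
    linear_combination -this
  have hc_neg : rescale (-1) c = 1 - X * (rescale (-1) c) ^ 2 := by
    have := congrArg (rescale (-1)) hc
    rw [map_add, map_mul, map_pow, map_one, rescale_X, map_neg, map_one] at this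
    linear_combination this
  have he : c + rescale (-1) c = 2 * expand 2 two_ne_zero e := by
    rw [self_add_rescale_neg_one]
    congr 3
    ext n
    simp [c]
  have hP := add_sq_eq_four_add_sq_mul_add_pow_four X_ne_zero hc hc_neg
  rw [he] at hP
  apply expand_injective 2 two_ne_zero
  apply eq_of_eq_add_mul_sq (y := 4 * X ^ 2) (c := 1)
  · simp
  · rw [map_pow]
    apply mul_left_cancel₀ (by norm_num : (4 : ℤ⟦X⟧) ≠ 0)
    linear_combination hP
  · have := congrArg (fun f ↦ expand 2 two_ne_zero (rescale 4 f)) hc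
    simp only [map_add, map_mul, map_pow, map_one, rescale_X, expand_X, map_ofNat] at this
    linear_combination this

end PowerSeries

theorem shapiro_convolution (n : ℕ) :
    ∑ j ∈ Finset.range (n + 1), catalan (2 * j) * catalan (2 * n - 2 * j) =
      4 ^ n * catalan n := by
  have h := congrArg (coeff n) sq_mk_catalan_two_mul
  rw [sq, coeff_mul, Nat.sum_antidiagonal_eq_sum_range_succ fun i j ↦
    coeff i (mk fun n ↦ (catalan (2 * n) : ℤ)) * coeff j (mk fun n ↦ (catalan (2 * n) : ℤ))] at h
  simp only [coeff_mk, coeff_rescale, coeff_map, catalanSeries_coeff, Nat.coe_castRingHom] at h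
  rw [← Nat.cast_inj (R := ℤ)]
  push_cast
  rw [← h]
  exact sum_congr rfl fun j _ ↦ by rw [Nat.mul_sub]
end

section
/- For all n ≥ 2, ∑_{i=1}^{n-1} 2^{2i-1} * C_{i-1} * C_{2n-1-2i} = 4^{n-1} * C_{n-1} - C_{2n-2}, where C_m denotes the m-th Catalan number. -/
/-!
Let `c = ∑ Cₘ Xᵐ`, split it as `c = E(X²) + X·O(X²)` into its even and odd bisections, and put
`D(X) = c(4X) = ∑ 4ᵐ Cₘ Xᵐ`. Bisecting `c = 1 + X c²` gives `E = 1 + 2XEO` and `O = E² + XO²`,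
from which `E² = 1 + 4X(E²)²`. Since also `D = 1 + 4XD²`, and this equation has only one power
series solution, `D = E²`: this is Shapiro's identity. Hence `D - E = E(E - 1) = 2XDO`, and the
coefficient of `Xⁿ⁻¹` on both sides is the claimed identity.
-/

open Finset PowerSeries

namespace PowerSeries

section Bisection

variable {R : Type*} [CommRing R]

noncomputable def evenPart (f : R⟦X⟧) : R⟦X⟧ := mk fun n => coeff (2 * n) f

noncomputable def oddPart (f : R⟦X⟧) : R⟦X⟧ := mk fun n => coeff (2 * n + 1) f

@[simp]
theorem coeff_evenPart (f : R⟦X⟧) (n : ℕ) : coeff n (evenPart f) = coeff (2 * n) f :=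
  coeff_mk _ _

@[simp]
theorem coeff_oddPart (f : R⟦X⟧) (n : ℕ) : coeff n (oddPart f) = coeff (2 * n + 1) f :=
  coeff_mk _ _

theorem coeff_expand_two_odd (f : R⟦X⟧) (n : ℕ) :
    coeff (2 * n + 1) (expand 2 two_ne_zero f) = 0 :=
  coeff_expand_of_not_dvd _ _ _ (by omega)

theorem coeff_X_mul_expand_two_even (f : R⟦X⟧) (n : ℕ) :
    coeff (2 * n) (X * expand 2 two_ne_zero f) = 0 := by
  rcases n with _ | n
  · exact coeff_zero_X_mul _
  · rw [show 2 * (n + 1) = 2 * n + 1 + 1 by ring, coeff_succ_X_mul, coeff_expand_two_odd]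

theorem evenPart_expand_add_X_mul_expand (A B : R⟦X⟧) :
    evenPart (expand 2 two_ne_zero A + X * expand 2 two_ne_zero B) = A := by
  ext n
  rw [coeff_evenPart, map_add, coeff_X_mul_expand_two_even, coeff_expand_mul, add_zero]

theorem oddPart_expand_add_X_mul_expand (A B : R⟦X⟧) :
    oddPart (expand 2 two_ne_zero A + X * expand 2 two_ne_zero B) = B := by
  ext n
  rw [coeff_oddPart, map_add, coeff_succ_X_mul, coeff_expand_two_odd, coeff_expand_mul, zero_add]

theorem expand_evenPart_add_X_mul_expand_oddPart (f : R⟦X⟧) :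
    expand 2 two_ne_zero (evenPart f) + X * expand 2 two_ne_zero (oddPart f) = f := by
  ext n
  obtain ⟨m, rfl | rfl⟩ := Nat.even_or_odd' n
  · rw [map_add, coeff_X_mul_expand_two_even, coeff_expand_mul, coeff_evenPart, add_zero]
  · rw [map_add, coeff_succ_X_mul, coeff_expand_two_odd, coeff_expand_mul, coeff_oddPart,
      zero_add]

theorem evenPart_oddPart_of_eq_one_add_X_mul_sq {f : R⟦X⟧} (hf : f = 1 + X * f ^ 2) :
    evenPart f = 1 + 2 * X * evenPart f * oddPart f ∧
      oddPart f = evenPart f ^ 2 + X * oddPart f ^ 2 := by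
  have hsplit : f = expand 2 two_ne_zero (1 + 2 * X * evenPart f * oddPart f) +
      X * expand 2 two_ne_zero (evenPart f ^ 2 + X * oddPart f ^ 2) := by
    conv_lhs => rw [hf, ← expand_evenPart_add_X_mul_expand_oddPart f]
    simp only [map_add, map_mul, map_pow, map_one, map_ofNat, expand_X]
    ring
  constructor
  · conv_lhs => rw [hsplit, evenPart_expand_add_X_mul_expand]
  · conv_lhs => rw [hsplit, oddPart_expand_add_X_mul_expand]

end Bisection

theorem eq_of_eq_one_add_C_mul_X_mul_sq {R : Type*} [CommRing R] (a : R) {F G : R⟦X⟧}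
    (hF : F = 1 + C a * X * F ^ 2) (hG : G = 1 + C a * X * G ^ 2) : F = G := by
  have hunit : IsUnit (1 - C a * X * (F + G)) := by
    simp [isUnit_iff_constantCoeff]
  have hprod : (1 - C a * X * (F + G)) * (F - G) = 0 := by
    linear_combination hF - hG
  exact sub_eq_zero.mp (hunit.mul_right_eq_zero.mp hprod)

end PowerSeries

local notation "𝒞" => catalanSeries.map (Nat.castRingHom ℤ)

theorem map_catalanSeries_eq_one_add_X_mul_sq : 𝒞 = 1 + X * 𝒞 ^ 2 := by
  have h := congrArg (map (Nat.castRingHom ℤ)) catalanSeries_sq_mul_X_add_one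
  rw [map_add, map_mul, map_pow, map_X, map_one] at h
  linear_combination -h

theorem rescale_four_map_catalanSeries_eq :
    rescale 4 𝒞 = 1 + C 4 * X * rescale 4 𝒞 ^ 2 := by
  conv_lhs => rw [map_catalanSeries_eq_one_add_X_mul_sq]
  rw [map_add, map_mul, map_pow, rescale_X, map_one]

theorem rescale_four_map_catalanSeries_eq_sq_evenPart : rescale 4 𝒞 = evenPart 𝒞 ^ 2 := by
  obtain ⟨hE, hO⟩ := evenPart_oddPart_of_eq_one_add_X_mul_sq map_catalanSeries_eq_one_add_X_mul_sq
  refine eq_of_eq_one_add_C_mul_X_mul_sq 4 rescale_four_map_catalanSeries_eq ?_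
  rw [map_ofNat]
  linear_combination (evenPart 𝒞 + 1 - 2 * X * evenPart 𝒞 * oddPart 𝒞) * hE
    + 4 * X * evenPart 𝒞 ^ 2 * hO

theorem rescale_four_map_catalanSeries_sub_evenPart :
    rescale 4 𝒞 - evenPart 𝒞 = 2 * X * rescale 4 𝒞 * oddPart 𝒞 := by
  obtain ⟨hE, -⟩ := evenPart_oddPart_of_eq_one_add_X_mul_sq map_catalanSeries_eq_one_add_X_mul_sq
  rw [rescale_four_map_catalanSeries_eq_sq_evenPart]
  linear_combination evenPart 𝒞 * hE

theorem four_pow_mul_catalan_sub_catalan_two_mul (t : ℕ) :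
    4 ^ (t + 1) * (catalan (t + 1) : ℤ) - catalan (2 * (t + 1)) =
      2 * ∑ p ∈ antidiagonal t, 4 ^ p.1 * (catalan p.1 : ℤ) * catalan (2 * p.2 + 1) := by
  have h := congrArg (coeff (t + 1)) rescale_four_map_catalanSeries_sub_evenPart
  rw [show (2 : ℤ⟦X⟧) * X * rescale 4 𝒞 * oddPart 𝒞 = X * (C 2 * (rescale 4 𝒞 * oddPart 𝒞)) by
    rw [map_ofNat]; ring, coeff_succ_X_mul, coeff_C_mul, coeff_mul] at h
  simpa [coeff_rescale, mul_assoc] using h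

theorem sum_Icc_two_pow_mul_catalan_eq (t : ℕ) :
    ∑ i ∈ Icc 1 (t + 1),
        (2 : ℤ) ^ (2 * i - 1) * catalan (i - 1) * catalan (2 * (t + 2) - 1 - 2 * i) =
      2 * ∑ p ∈ antidiagonal t, 4 ^ p.1 * (catalan p.1 : ℤ) * catalan (2 * p.2 + 1) := by
  rw [mul_sum]
  refine sum_nbij' (fun i => (i - 1, t + 1 - i)) (fun p => p.1 + 1) ?_ ?_ ?_ ?_ ?_
  · intro i hi
    rw [mem_Icc] at hi
    rw [HasAntidiagonal.mem_antidiagonal]; omega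
  · intro p hp
    rw [HasAntidiagonal.mem_antidiagonal] at hp
    rw [mem_Icc]; omega
  · intro i hi
    rw [mem_Icc] at hi
    dsimp only; omega
  · intro p hp
    rw [HasAntidiagonal.mem_antidiagonal] at hp
    ext <;> dsimp only <;> omega
  · intro i hi
    rw [mem_Icc] at hi
    obtain ⟨k, rfl⟩ : ∃ k, i = k + 1 := ⟨i - 1, by omega⟩
    rw [show 2 * (k + 1) - 1 = 2 * k + 1 by omega,
      show 2 * (t + 2) - 1 - 2 * (k + 1) = 2 * (t + 1 - (k + 1)) + 1 by omega, pow_succ, pow_mul]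
    simp only [Nat.add_sub_cancel]
    ring

theorem catalan_weighted_sum (n : ℕ) (hn : 2 ≤ n) :
    ∑ i ∈ Finset.Icc 1 (n - 1),
        (2 : ℤ) ^ (2 * i - 1) * catalan (i - 1) * catalan (2 * n - 1 - 2 * i) =
      4 ^ (n - 1) * catalan (n - 1) - catalan (2 * n - 2) := by
  obtain ⟨t, rfl⟩ : ∃ t, n = t + 2 := ⟨n - 2, by omega⟩
  rw [show t + 2 - 1 = t + 1 by omega, show 2 * (t + 2) - 2 = 2 * (t + 1) by omega,
    sum_Icc_two_pow_mul_catalan_eq, four_pow_mul_catalan_sub_catalan_two_mul]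
end

section
/- For all n ≥ 1, the alternating convolution ∑_{j=0}^{2n-2} (-1)^j * C_j * C_{2n-2-j} equals 2^{2n-1} * C_{n-1} - C_{2n-1}, where C_m denotes the m-th Catalan number. -/
/-!
With `m = n - 1`, adding the alternating convolution `∑ (-1)^j C_j C_{2m-j}` to the ordinary
one, which is `C_{2m+1}`, cancels the odd terms and doubles the even ones. So everything rests
on the even-index convolution `∑_i C_{2i} C_{2m-2i} = 4^m C_m`. Both sides satisfy
`(m + 2) a_{m+1} = (16m + 8) a_m` with `a_0 = 1`; for the sum this recurrence is found by
Zeilberger's creative telescoping, and `evenCatalanConvCert` is its certificate: its forward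
difference in `i` is the summand of the recurrence, up to the factor `(m + 1)(2m + 3)`.
-/

open Finset

theorem catalan_succ_eq_sum_range (m : ℕ) :
    catalan (m + 1) = ∑ j ∈ range (m + 1), catalan j * catalan (m - j) := by
  rw [catalan_succ, Fin.sum_univ_eq_sum_range (fun j => catalan j * catalan (m - j))]

theorem succ_succ_mul_catalan_succ (m : ℕ) :
    (m + 2) * catalan (m + 1) = 2 * (2 * m + 1) * catalan m := by
  refine Nat.eq_of_mul_eq_mul_left m.succ_pos ?_
  calc (m + 1) * ((m + 2) * catalan (m + 1)) = (m + 1) * (m + 1).centralBinom := by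
        rw [← succ_mul_catalan_eq_centralBinom]
    _ = 2 * (2 * m + 1) * m.centralBinom := Nat.succ_mul_centralBinom_succ m
    _ = (m + 1) * (2 * (2 * m + 1) * catalan m) := by
        rw [← succ_mul_catalan_eq_centralBinom]; ring

theorem succ_mul_catalan_two_mul_add_two (m : ℕ) :
    ((m : ℤ) + 1) * (2 * m + 3) * catalan (2 * m + 2) =
      2 * (4 * m + 1) * (4 * m + 3) * catalan (2 * m) := by
  have h₁ := succ_succ_mul_catalan_succ (2 * m)
  have h₂ := succ_succ_mul_catalan_succ (2 * m + 1)
  rw [show 2 * m + 1 + 1 = 2 * m + 2 by ring] at h₂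
  zify at h₁ h₂
  linear_combination ((m : ℤ) + 1) * h₂ + (4 * (m : ℤ) + 3) * h₁

theorem sum_range_one_add_neg_one_pow_mul {R : Type*} [CommRing R] (f : ℕ → R) (k : ℕ) :
    ∑ j ∈ range (2 * k + 1), (1 + (-1) ^ j) * f j = 2 * ∑ i ∈ range (k + 1), f (2 * i) := by
  induction k with
  | zero => norm_num [one_add_one_eq_two]
  | succ k ih =>
    rw [show 2 * (k + 1) + 1 = 2 * k + 1 + 1 + 1 by ring, sum_range_succ, sum_range_succ, ih,
      sum_range_succ _ (k + 1), Odd.neg_one_pow ⟨k, rfl⟩, Even.neg_one_pow ⟨k + 1, by ring⟩,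
      show 2 * (k + 1) = 2 * k + 1 + 1 by ring]
    ring

def evenCatalanConv (k : ℕ) : ℤ :=
  ∑ i ∈ range (k + 1), (catalan (2 * i) : ℤ) * catalan (2 * (k - i))

def evenCatalanConvCert (k i : ℕ) : ℤ :=
  (i : ℤ) * (2 * i + 1) * (2 * i - 4 - 3 * k) * catalan (2 * i) * catalan (2 * (k + 1 - i))

theorem evenCatalanConvCert_succ_sub {k i : ℕ} (hi : i ≤ k) :
    evenCatalanConvCert k (i + 1) - evenCatalanConvCert k i =
      ((k : ℤ) + 1) * (2 * k + 3) * ((k + 2) * (catalan (2 * i) * catalan (2 * (k + 1 - i))) -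
        (16 * k + 8) * (catalan (2 * i) * catalan (2 * (k - i)))) := by
  obtain ⟨j, rfl⟩ : ∃ j, k = i + j := ⟨k - i, by omega⟩
  rw [evenCatalanConvCert, evenCatalanConvCert, show i + j + 1 - (i + 1) = j by omega,
    show i + j + 1 - i = j + 1 by omega, show i + j - i = j by omega,
    show 2 * (i + 1) = 2 * i + 2 by ring, show 2 * (j + 1) = 2 * j + 2 by ring]
  push_cast
  linear_combination (2 * (i : ℤ) - 2 - 3 * (i + j)) * (catalan (2 * j) : ℤ) *
      succ_mul_catalan_two_mul_add_two i -
    (3 * (i : ℤ) + j + 2) * (catalan (2 * i) : ℤ) * succ_mul_catalan_two_mul_add_two j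

theorem evenCatalanConv_recurrence (k : ℕ) :
    ((k : ℤ) + 2) * evenCatalanConv (k + 1) = (16 * k + 8) * evenCatalanConv k := by
  have htele := sum_range_sub (evenCatalanConvCert k) (k + 1)
  rw [sum_congr rfl fun i hi =>
      evenCatalanConvCert_succ_sub (Nat.lt_succ_iff.mp (mem_range.mp hi)),
    ← mul_sum, sum_sub_distrib, ← mul_sum, ← mul_sum] at htele
  have hsplit : evenCatalanConv (k + 1) =
      ∑ i ∈ range (k + 1), (catalan (2 * i) : ℤ) * catalan (2 * (k + 1 - i)) +
        catalan (2 * (k + 1)) := by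
    simp [evenCatalanConv, sum_range_succ _ (k + 1)]
  have hcert₀ : evenCatalanConvCert k 0 = 0 := by simp [evenCatalanConvCert]
  have hcert : evenCatalanConvCert k (k + 1) =
      ((k : ℤ) + 1) * (2 * k + 3) * (-k - 2) * catalan (2 * (k + 1)) := by
    simp only [evenCatalanConvCert, Nat.sub_self, mul_zero, catalan_zero]
    push_cast
    ring
  refine mul_left_cancel₀ (by positivity : ((k : ℤ) + 1) * (2 * k + 3) ≠ 0) ?_
  rw [← evenCatalanConv] at htele
  linear_combination htele + ((k : ℤ) + 1) * (2 * k + 3) * (k + 2) * hsplit + hcert - hcert₀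

theorem evenCatalanConv_eq (k : ℕ) : evenCatalanConv k = 4 ^ k * catalan k := by
  induction k with
  | zero => simp [evenCatalanConv]
  | succ k ih =>
    have hrec : ((k : ℤ) + 2) * catalan (k + 1) = 2 * (2 * k + 1) * catalan k := by
      exact_mod_cast succ_succ_mul_catalan_succ k
    refine mul_left_cancel₀ (by positivity : (k : ℤ) + 2 ≠ 0) ?_
    rw [evenCatalanConv_recurrence, ih]
    linear_combination -(4 : ℤ) ^ (k + 1) * hrec

theorem catalan_alternating_convolution_general (n : ℕ) :
    ∑ j ∈ Finset.range (2 * n - 1),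
        (-1 : ℤ) ^ j * catalan j * catalan (2 * n - 2 - j) =
      2 ^ (2 * n - 1) * catalan (n - 1) - catalan (2 * n - 1) := by
  rcases n with _ | k
  · simp
  simp only [show 2 * (k + 1) - 1 = 2 * k + 1 by omega, show 2 * (k + 1) - 2 = 2 * k by omega,
    Nat.add_sub_cancel]
  have hfull : ∑ j ∈ range (2 * k + 1), (catalan j : ℤ) * catalan (2 * k - j) =
      catalan (2 * k + 1) := by
    exact_mod_cast (catalan_succ_eq_sum_range (2 * k)).symm
  have heven :=
    sum_range_one_add_neg_one_pow_mul (fun j => (catalan j : ℤ) * catalan (2 * k - j)) k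
  simp only [← mul_tsub] at heven
  rw [← evenCatalanConv, evenCatalanConv_eq] at heven
  calc ∑ j ∈ range (2 * k + 1), (-1 : ℤ) ^ j * catalan j * catalan (2 * k - j)
      = ∑ j ∈ range (2 * k + 1), (1 + (-1 : ℤ) ^ j) * (catalan j * catalan (2 * k - j)) -
          ∑ j ∈ range (2 * k + 1), (catalan j : ℤ) * catalan (2 * k - j) := by
        rw [← sum_sub_distrib]
        exact sum_congr rfl fun j _ => by ring
    _ = 2 ^ (2 * k + 1) * catalan k - catalan (2 * k + 1) := by
        rw [heven, hfull, pow_succ, pow_mul]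
        ring

theorem catalan_alternating_convolution (n : ℕ) (hn : 1 ≤ n) :
    ∑ j ∈ Finset.range (2 * n - 1),
        (-1 : ℤ) ^ j * catalan j * catalan (2 * n - 2 - j) =
      2 ^ (2 * n - 1) * catalan (n - 1) - catalan (2 * n - 1) :=
  catalan_alternating_convolution_general n
end

section
/- For all n ≥ 1, ∑ over k ≥ 0 and compositions (i_1, ..., i_{k+1}) of n into k+1 positive parts of 2^{k+1} * C_{2i_1 - 1} * C_{2i_2 - 1} * ... * C_{2i_{k+1} - 1} = C_{2n}, where C_m denotes the m-th Catalan number. -/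
/-!
Weight a composition by `∏ 2 * C (2 * i - 1)` over its blocks; this absorbs the factor `2 ^ (k + 1)`,
one `2` per block. Splitting off the first block gives the recursion
`S (n + 1) = ∑ i ≤ n, 2 * C (2 * (n - i) + 1) * S i`. The even Catalan numbers satisfy the same
recursion: in `C (2 * n + 2) = ∑ i + j = 2 * n + 1, C i * C j` exactly one of `i`, `j` is odd, and
the symmetry `i ↔ j` shows that both parities contribute equally.
-/

open Finset

theorem Finset.sum_range_two_mul {M : Type*} [AddCommMonoid M] (f : ℕ → M) (n : ℕ) :
    ∑ i ∈ range (2 * n), f i = ∑ i ∈ range n, (f (2 * i) + f (2 * i + 1)) := by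
  induction n with
  | zero => simp
  | succ n ih => rw [Nat.mul_succ, sum_range_succ, sum_range_succ, sum_range_succ, ih, add_assoc]

theorem catalan_two_mul_add_two (n : ℕ) :
    catalan (2 * n + 2) = 2 * ∑ i ∈ range (n + 1), catalan (2 * i) * catalan (2 * (n - i) + 1) := by
  have hsymm : ∑ i ∈ range (n + 1), catalan (2 * i + 1) * catalan (2 * (n - i)) =
      ∑ i ∈ range (n + 1), catalan (2 * i) * catalan (2 * (n - i) + 1) := by
    rw [← sum_range_reflect]
    refine sum_congr rfl fun i hi => ?_
    rw [mem_range] at hi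
    rw [mul_comm]
    congr 2; omega
  calc catalan (2 * n + 2) = ∑ i ∈ range (2 * (n + 1)), catalan i * catalan (2 * n + 1 - i) := by
        rw [catalan_succ', Nat.sum_antidiagonal_eq_sum_range_succ_mk]; rfl
    _ = ∑ i ∈ range (n + 1), (catalan (2 * i) * catalan (2 * (n - i) + 1) +
          catalan (2 * i + 1) * catalan (2 * (n - i))) := by
        rw [sum_range_two_mul]
        refine sum_congr rfl fun i hi => ?_
        rw [mem_range] at hi
        congr 3 <;> omega
    _ = _ := by rw [sum_add_distrib, hsymm, two_mul]

namespace Composition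

variable {M : Type*} [Semiring M] (f : ℕ → M)

theorem sum_prod_map_blocks_zero : ∑ c : Composition 0, (c.blocks.map f).prod = 1 := by
  have hnil (c : Composition 0) : c.blocks = [] :=
    List.eq_nil_of_length_eq_zero (Nat.le_zero.1 c.length_le)
  simp [hnil, composition_card]

theorem blocks_eq_cons_tail {m : ℕ} (hm : 0 < m) (c : Composition m) :
    c.blocks = (m - c.blocks.tail.sum) :: c.blocks.tail := by
  have hsum := c.blocks_sum
  cases h : c.blocks with
  | nil => simp [h] at hsum; omega
  | cons a t => simp only [h, List.sum_cons, List.tail_cons] at hsum ⊢; congr; omega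

theorem sum_prod_map_blocks_succ (n : ℕ) :
    ∑ c : Composition (n + 1), (c.blocks.map f).prod =
      ∑ i ∈ range (n + 1), f (n + 1 - i) * ∑ c : Composition i, (c.blocks.map f).prod := by
  rw [← sum_fiberwise_of_maps_to (g := fun c : Composition (n + 1) => c.blocks.tail.sum)
    (t := range (n + 1)) fun c _ => ?_]
  · refine sum_congr rfl fun i hi => ?_
    have hi : i < n + 1 := mem_range.1 hi
    have hcons (c : Composition (n + 1)) (hc : c.blocks.tail.sum = i) :
        c.blocks = (n + 1 - i) :: c.blocks.tail := hc ▸ c.blocks_eq_cons_tail n.succ_pos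
    rw [mul_sum]
    refine sum_bij' (fun c hc => ⟨c.blocks.tail, fun h => c.blocks_pos (List.mem_of_mem_tail h),
        (mem_filter.1 hc).2⟩)
      (fun c _ => ⟨(n + 1 - i) :: c.blocks, ?_, ?_⟩) (fun _ _ => mem_univ _) ?_ ?_ ?_ ?_
    · intro j hj
      rcases List.mem_cons.1 hj with rfl | hj
      exacts [Nat.sub_pos_of_lt hi, c.blocks_pos hj]
    · simp; omega
    · simp
    · intro c hc
      ext1
      exact (hcons c (mem_filter.1 hc).2).symm
    · intro c _
      rfl
    · intro c hc
      conv_lhs => rw [hcons c (mem_filter.1 hc).2]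
      rfl
  · have hhead := c.blocks_pos (c.blocks_eq_cons_tail n.succ_pos ▸ List.mem_cons_self ..)
    exact mem_range.2 (by omega)

theorem sum_prod_map_blocks_two_mul_catalan (n : ℕ) :
    ∑ c : Composition n, (c.blocks.map fun i => 2 * catalan (2 * i - 1)).prod =
      catalan (2 * n) := by
  induction n using Nat.strong_induction_on with
  | _ n ih =>
  cases n with
  | zero => rw [sum_prod_map_blocks_zero, mul_zero, catalan_zero]
  | succ n =>
    rw [sum_prod_map_blocks_succ, mul_add_one, catalan_two_mul_add_two, mul_sum]
    refine sum_congr rfl fun i hi => ?_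
    rw [ih i (mem_range.1 hi), show 2 * (n + 1 - i) - 1 = 2 * (n - i) + 1 by grind]
    ring

end Composition

theorem catalan_composition_sum (n : ℕ) (hn : 1 ≤ n) :
    ∑ k ∈ Finset.range n,
        ∑ c ∈ Finset.univ.filter (fun c : Composition n => c.length = k + 1),
          2 ^ (k + 1) * (c.blocks.map (fun i => catalan (2 * i - 1))).prod =
      catalan (2 * n) := by
  set w : Composition n → ℕ := fun c => (c.blocks.map fun i => 2 * catalan (2 * i - 1)).prod
  have hw (k : ℕ) (c : Composition n) (hc : c ∈ univ.filter fun c => c.length = k) :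
      2 ^ k * (c.blocks.map (fun i => catalan (2 * i - 1))).prod = w c := by
    simp [w, List.prod_map_mul, ← (mem_filter.1 hc).2]
  have hlength_zero : ∑ c ∈ univ.filter (fun c : Composition n => c.length = 0), w c = 0 :=
    sum_eq_zero fun c hc => absurd (mem_filter.1 hc).2 (c.length_pos_of_pos hn).ne'
  calc _ = ∑ k ∈ range n, ∑ c ∈ univ.filter (fun c : Composition n => c.length = k + 1), w c :=
        sum_congr rfl fun k _ => sum_congr rfl (hw (k + 1))
    _ = ∑ k ∈ range (n + 1), ∑ c ∈ univ.filter (fun c : Composition n => c.length = k), w c := by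
        rw [sum_range_succ', hlength_zero, add_zero]
    _ = ∑ c, w c :=
        sum_fiberwise_of_maps_to (fun c _ => mem_range.2 (Nat.lt_succ_of_le c.length_le)) w
    _ = catalan (2 * n) := Composition.sum_prod_map_blocks_two_mul_catalan n
end

section
/- For all n ≥ 2, C_{2n-2} - ∑_{i=2}^{n-1} C_{2n-2i} * 2 * C_{2i-3} = 2 * C_{2n-3}, where C_m denotes the m-th Catalan number. -/
private lemma sum_range_two_mul (t : ℕ) (f : ℕ → ℕ) :
    ∑ j ∈ Finset.range (2 * t), f j = ∑ k ∈ Finset.range t, (f (2 * k) + f (2 * k + 1)) := by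
  induction t with
  | zero => simp
  | succ t ih =>
      rw [Nat.mul_succ, Finset.sum_range_succ, Finset.sum_range_succ, Finset.sum_range_succ, ih,
        add_assoc]

private lemma catalan_even_rec (m : ℕ) :
    catalan (2 * m + 2) =
      2 * catalan (2 * m + 1) +
        ∑ k ∈ Finset.range m, catalan (2 * m - 2 * k) * 2 * catalan (2 * k + 1) := by
  have h0 : catalan (2 * m + 2) =
      ∑ j ∈ Finset.range (2 * m + 2), catalan j * catalan (2 * m + 1 - j) := by
    rw [catalan_succ]
    rw [← Fin.sum_univ_eq_sum_range (fun j => catalan j * catalan (2 * m + 1 - j)) (2 * m + 2)]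
  have h2 : 2 * m + 2 = 2 * (m + 1) := by ring
  rw [h0, h2, sum_range_two_mul]
  have heven : ∀ k ∈ Finset.range (m + 1),
      catalan (2 * k) * catalan (2 * m + 1 - 2 * k)
        = catalan (2 * k) * catalan (2 * (m - k) + 1) := by
    intro k hk
    rw [Finset.mem_range] at hk
    have : 2 * m + 1 - 2 * k = 2 * (m - k) + 1 := by omega
    rw [this]
  have hodd : ∀ k ∈ Finset.range (m + 1),
      catalan (2 * k + 1) * catalan (2 * m + 1 - (2 * k + 1))
        = catalan (2 * k + 1) * catalan (2 * (m - k)) := by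
    intro k hk
    rw [Finset.mem_range] at hk
    have : 2 * m + 1 - (2 * k + 1) = 2 * (m - k) := by omega
    rw [this]
  rw [Finset.sum_add_distrib, Finset.sum_congr rfl heven, Finset.sum_congr rfl hodd]
  have hrefl : ∑ k ∈ Finset.range (m + 1), catalan (2 * k) * catalan (2 * (m - k) + 1)
      = ∑ k ∈ Finset.range (m + 1), catalan (2 * k + 1) * catalan (2 * (m - k)) := by
    rw [← Finset.sum_range_reflect]
    apply Finset.sum_congr rfl
    intro k hk
    rw [Finset.mem_range] at hk
    have h1 : m + 1 - 1 - k = m - k := by omega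
    have h2 : m - (m - k) = k := by omega
    rw [h1, h2, mul_comm]
  rw [hrefl, ← two_mul]
  rw [Finset.sum_range_succ]
  have : m - m = 0 := by omega
  rw [this]
  simp only [mul_zero, catalan_zero, mul_one]
  rw [mul_add, add_comm, Finset.mul_sum]
  congr 1
  apply Finset.sum_congr rfl
  intro k hk
  rw [Finset.mem_range] at hk
  have e : 2 * (m - k) = 2 * m - 2 * k := by omega
  rw [e]; ring

theorem catalan_avoid_even01 (n : ℕ) (hn : 2 ≤ n) :
    (catalan (2 * n - 2) : ℤ) -
        ∑ i ∈ Finset.Icc 2 (n - 1), (catalan (2 * n - 2 * i) : ℤ) * 2 * catalan (2 * i - 3) =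
      2 * catalan (2 * n - 3) := by
  obtain ⟨m, rfl⟩ : ∃ m, n = m + 2 := ⟨n - 2, by omega⟩
  have h1 : 2 * (m + 2) - 2 = 2 * m + 2 := by omega
  have h2 : 2 * (m + 2) - 3 = 2 * m + 1 := by omega
  have h3 : m + 2 - 1 = m + 1 := by omega
  rw [h1, h2, h3]
  have hsum : ∑ i ∈ Finset.Icc 2 (m + 1),
      (catalan (2 * (m + 2) - 2 * i) : ℤ) * 2 * catalan (2 * i - 3)
      = ∑ k ∈ Finset.range m, (catalan (2 * m - 2 * k) : ℤ) * 2 * catalan (2 * k + 1) := by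
    rw [← Finset.Ico_add_one_right_eq_Icc, Finset.sum_Ico_eq_sum_range]
    have hm : m + 1 + 1 - 2 = m := by omega
    rw [hm]
    apply Finset.sum_congr rfl
    intro k hk
    have e1 : 2 * (m + 2) - 2 * (2 + k) = 2 * m - 2 * k := by omega
    have e2 : 2 * (2 + k) - 3 = 2 * k + 1 := by omega
    rw [e1, e2]
  rw [hsum]
  have hc := congrArg (fun x : ℕ => (x : ℤ)) (catalan_even_rec m)
  push_cast at hc
  rw [hc]; ring
end

section
/- For all n ≥ 2, C_{2n-2} - ∑_{i=1}^{n-1} (2^{2i-1} * C_{i-1} - C_{2i-1}) * C_{2n-2i-1} = C_{2n-1} + 2*C_{2n-2} - 2^{2n-1}*C_{n-1}, where C_m denotes the m-th Catalan number. -/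
open Finset

/-- `catalan` cast to `ℚ`. -/
def cq (m : ℕ) : ℚ := catalan m

lemma catalan_pos' (m : ℕ) : 0 < catalan m := by
  have h2 := succ_mul_catalan_eq_centralBinom m
  have h3 := m.centralBinom_pos
  by_contra h
  push_neg at h
  interval_cases hc : catalan m
  omega

lemma cq_pos (m : ℕ) : 0 < cq m := by
  unfold cq; exact_mod_cast catalan_pos' m

lemma cq_ne (m : ℕ) : cq m ≠ 0 := ne_of_gt (cq_pos m)

@[simp] lemma cq_zero : cq 0 = 1 := by simp [cq]

lemma cq_two : cq 2 = 2 := by simp [cq, catalan_two]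

/-- One-step ratio for Catalan numbers over `ℚ`. -/
lemma cq_step (m : ℕ) : ((m : ℚ) + 2) * cq (m + 1) = 2 * (2 * m + 1) * cq m := by
  have h1 : ((m : ℚ) + 1 + 1) * cq (m + 1) = (Nat.centralBinom (m + 1) : ℚ) := by
    unfold cq
    have := succ_mul_catalan_eq_centralBinom (m + 1)
    exact_mod_cast this
  have h2 : ((m : ℚ) + 1) * cq m = (Nat.centralBinom m : ℚ) := by
    unfold cq
    have := succ_mul_catalan_eq_centralBinom m
    exact_mod_cast this
  have h3 : ((m : ℚ) + 1) * (Nat.centralBinom (m + 1) : ℚ)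
      = 2 * (2 * m + 1) * (Nat.centralBinom m : ℚ) := by
    have := Nat.succ_mul_centralBinom_succ m
    exact_mod_cast this
  have hm : ((m : ℚ) + 1) ≠ 0 := by positivity
  have : ((m : ℚ) + 1) * (((m : ℚ) + 2) * cq (m + 1))
      = ((m : ℚ) + 1) * (2 * (2 * m + 1) * cq m) := by
    calc ((m : ℚ) + 1) * (((m : ℚ) + 2) * cq (m + 1))
        = ((m : ℚ) + 1) * (((m : ℚ) + 1 + 1) * cq (m + 1)) := by ring_nf
      _ = ((m : ℚ) + 1) * (Nat.centralBinom (m + 1) : ℚ) := by rw [h1]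
      _ = 2 * (2 * m + 1) * (Nat.centralBinom m : ℚ) := h3
      _ = 2 * (2 * m + 1) * (((m : ℚ) + 1) * cq m) := by rw [h2]
      _ = ((m : ℚ) + 1) * (2 * (2 * m + 1) * cq m) := by ring
  exact mul_left_cancel₀ hm this

/-- Two-step ratio. -/
lemma cq_step2 (t : ℕ) :
    ((t : ℚ) + 2) * ((t : ℚ) + 3) * cq (t + 2) = 4 * (2 * t + 1) * (2 * t + 3) * cq t := by
  have h1 := cq_step t
  have h2 := cq_step (t + 1)
  push_cast at h2
  have ht : ((t : ℚ) + 2) ≠ 0 := by positivity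
  have : ((t : ℚ) + 2) * (((t : ℚ) + 2) * ((t : ℚ) + 3) * cq (t + 2))
      = ((t : ℚ) + 2) * (4 * (2 * t + 1) * (2 * t + 3) * cq t) := by
    calc ((t : ℚ) + 2) * (((t : ℚ) + 2) * ((t : ℚ) + 3) * cq (t + 2))
        = ((t : ℚ) + 2) * ((t : ℚ) + 1 + 2) * cq (t + 1 + 1) * ((t : ℚ) + 2) := by
          push_cast; ring
      _ = ((t : ℚ) + 2) * (2 * (2 * (t + 1) + 1) * cq (t + 1)) * ((t : ℚ) + 2) := by
          rw [mul_assoc ((t : ℚ) + 2), h2]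
      _ = 2 * (2 * (t : ℚ) + 3) * (((t : ℚ) + 2) * cq (t + 1)) * ((t : ℚ) + 2) := by ring
      _ = 2 * (2 * (t : ℚ) + 3) * (2 * (2 * t + 1) * cq t) * ((t : ℚ) + 2) := by rw [h1]
      _ = ((t : ℚ) + 2) * (4 * (2 * t + 1) * (2 * t + 3) * cq t) := by ring
  exact mul_left_cancel₀ ht this

/-- Even-index two-step ratio in division form. -/
lemma cq_even_step (k : ℕ) :
    cq (2 * k + 2)
      = 4 * (4 * (k : ℚ) + 1) * (4 * k + 3) / ((2 * k + 2) * (2 * k + 3)) * cq (2 * k) := by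
  have h := cq_step2 (2 * k)
  push_cast at h
  have h2 : ((2 : ℚ) * k + 2) ≠ 0 := by positivity
  have h3 : ((2 : ℚ) * k + 3) ≠ 0 := by positivity
  field_simp
  linarith [h]

/-- Splitting a sum over `range (2m+1)` by parity. -/
lemma sum_split_odd (m : ℕ) (g : ℕ → ℚ) :
    ∑ i ∈ range (2 * m + 1), g i
      = ∑ j ∈ range (m + 1), g (2 * j) + ∑ j ∈ range m, g (2 * j + 1) := by
  induction m with
  | zero => simp
  | succ m ih =>
    have h1 : 2 * (m + 1) + 1 = (2 * m + 1) + 1 + 1 := by ring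
    rw [h1, sum_range_succ, sum_range_succ, ih, sum_range_succ (fun j => g (2 * j)) (m + 1),
      sum_range_succ (fun j => g (2 * j + 1)) m]
    have e1 : 2 * m + 1 + 1 = 2 * (m + 1) := by ring
    have e2 : 2 * m + 1 = 2 * m + 1 := rfl
    rw [e1]
    ring

/-- Splitting a sum over `range (2m+2)` by parity. -/
lemma sum_split_even (m : ℕ) (g : ℕ → ℚ) :
    ∑ i ∈ range (2 * m + 2), g i
      = ∑ j ∈ range (m + 1), g (2 * j) + ∑ j ∈ range (m + 1), g (2 * j + 1) := by
  rw [show 2 * m + 2 = (2 * m + 1) + 1 from rfl, sum_range_succ, sum_split_odd,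
    sum_range_succ (fun j => g (2 * j + 1)) m]
  have : 2 * m + 1 = 2 * m + 1 := rfl
  ring

/-- The Catalan recurrence as a `range` sum over `ℚ`. -/
lemma cq_rec (N : ℕ) : cq (N + 1) = ∑ i ∈ range (N + 1), cq i * cq (N - i) := by
  unfold cq
  rw [catalan_succ]
  rw [show (∑ i ∈ range (N + 1), (catalan i : ℚ) * (catalan (N - i) : ℚ))
      = ∑ i : Fin (N + 1), (catalan (i : ℕ) : ℚ) * (catalan (N - (i : ℕ)) : ℚ) from
    Finset.sum_range _]
  push_cast
  rfl

/-- Even-even Catalan convolution. -/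
def Efun (m : ℕ) : ℚ := ∑ j ∈ range (m + 1), cq (2 * j) * cq (2 * m - 2 * j)

/-- Odd-even Catalan convolution. -/
def Xfun (m : ℕ) : ℚ := ∑ j ∈ range (m + 1), cq (2 * j + 1) * cq (2 * m - 2 * j)

/-- Odd-odd Catalan convolution. -/
def Odf (m : ℕ) : ℚ := ∑ j ∈ range m, cq (2 * j + 1) * cq (2 * m - 2 * j - 1)

lemma odd_split (m : ℕ) : cq (2 * m + 1) = Efun m + Odf m := by
  rw [cq_rec (2 * m), sum_split_odd m (fun i => cq i * cq (2 * m - i))]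
  unfold Efun Odf
  congr 1

lemma even_split (m : ℕ) : cq (2 * m + 2) = 2 * Xfun m := by
  have h0 : (2 : ℕ) * m + 2 = (2 * m + 1) + 1 := rfl
  rw [h0, cq_rec (2 * m + 1),
    show (2 : ℕ) * m + 1 + 1 = 2 * m + 2 from rfl,
    sum_split_even m (fun i => cq i * cq (2 * m + 1 - i))]
  have hodd : ∑ j ∈ range (m + 1), cq (2 * j + 1) * cq (2 * m + 1 - (2 * j + 1))
      = Xfun m := by
    unfold Xfun
    refine Finset.sum_congr rfl fun j hj => ?_
    congr 2
    omega
  have heven : ∑ j ∈ range (m + 1), cq (2 * j) * cq (2 * m + 1 - 2 * j) = Xfun m := by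
    rw [← Finset.sum_range_reflect]
    unfold Xfun
    refine Finset.sum_congr rfl fun j hj => ?_
    rw [Finset.mem_range] at hj
    have e1 : 2 * (m + 1 - 1 - j) = 2 * m - 2 * j := by omega
    rw [e1]
    have e2 : 2 * m + 1 - (2 * m - 2 * j) = 2 * j + 1 := by omega
    rw [e2, mul_comm]
  rw [hodd, heven]
  ring

/-- The WZ certificate polynomial. -/
def Mq (x y : ℚ) : ℚ :=
  -24 + 92 * y + 88 * y ^ 2 - 320 * y ^ 3 + 128 * y ^ 4
    + x * (-146 + 124 * y + 608 * y ^ 2 - 448 * y ^ 3)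
    + x ^ 2 * (-224 - 192 * y + 512 * y ^ 2)
    + x ^ 3 * (-96 - 192 * y)

/-- The WZ certificate function. -/
def Gf (m j : ℕ) : ℚ :=
  (j : ℚ) * Mq m j * cq (2 * j) * cq (2 * m - 2 * j) /
    (((m : ℚ) - j + 1) * (2 * (m : ℚ) - 2 * j + 3) * ((m : ℚ) + 1) * (2 * (m : ℚ) + 3))

lemma perj (j k : ℕ) :
    Gf (j + k + 1) (j + 1) - Gf (j + k + 1) j
      = ((j : ℚ) + k + 3) * (cq (2 * j) * cq (2 * k + 4))
        - 8 * (2 * ((j : ℚ) + k + 1) + 1) * (cq (2 * j) * cq (2 * k + 2)) := by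
  have gj : Gf (j + k + 1) j
      = ((j : ℚ) * Mq ((j : ℚ) + k + 1) j * cq (2 * j) * cq (2 * k + 2)) /
        (((k : ℚ) + 2) * (2 * (k : ℚ) + 5) * ((j : ℚ) + k + 2) * (2 * (j : ℚ) + 2 * k + 5)) := by
    unfold Gf
    rw [show 2 * (j + k + 1) - 2 * j = 2 * k + 2 by omega]
    push_cast
    ring
  have gj1 : Gf (j + k + 1) (j + 1)
      = (((j : ℚ) + 1) * Mq ((j : ℚ) + k + 1) ((j : ℚ) + 1) * cq (2 * j + 2) * cq (2 * k)) /
        (((k : ℚ) + 1) * (2 * (k : ℚ) + 3) * ((j : ℚ) + k + 2) * (2 * (j : ℚ) + 2 * k + 5)) := by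
    unfold Gf
    rw [show 2 * (j + k + 1) - 2 * (j + 1) = 2 * k by omega,
      show 2 * (j + 1) = 2 * j + 2 by omega]
    push_cast
    ring
  have E1 := cq_even_step j
  have E2 := cq_even_step k
  have E3 : cq (2 * k + 4)
      = 4 * (4 * (k : ℚ) + 5) * (4 * k + 7) / ((2 * k + 4) * (2 * k + 5)) * cq (2 * k + 2) := by
    have h := cq_even_step (k + 1)
    rw [show 2 * (k + 1) + 2 = 2 * k + 4 by omega, show 2 * (k + 1) = 2 * k + 2 by omega] at h
    rw [h]
    push_cast
    ring
  rw [gj, gj1, E3, E2, E1]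
  unfold Mq
  have n1 : ((k : ℚ) + 2) ≠ 0 := by positivity
  have n2 : (2 * (k : ℚ) + 5) ≠ 0 := by positivity
  have n3 : ((j : ℚ) + k + 2) ≠ 0 := by positivity
  have n4 : (2 * (j : ℚ) + 2 * k + 5) ≠ 0 := by positivity
  have n5 : ((k : ℚ) + 1) ≠ 0 := by positivity
  have n6 : (2 * (k : ℚ) + 3) ≠ 0 := by positivity
  have n7 : (2 * (j : ℚ) + 2) ≠ 0 := by positivity
  have n8 : (2 * (j : ℚ) + 3) ≠ 0 := by positivity
  have n9 : (2 * (k : ℚ) + 2) ≠ 0 := by positivity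
  have n10 : (2 * (k : ℚ) + 4) ≠ 0 := by positivity
  field_simp
  ring

lemma boundary (m : ℕ) :
    ((m : ℚ) + 2) * (cq (2 * m) * cq 2) - 8 * (2 * (m : ℚ) + 1) * (cq (2 * m) * cq 0)
        + Gf m m = -(((m : ℚ) + 2) * cq (2 * m + 2)) := by
  have gm : Gf m m = ((m : ℚ) * Mq m m * cq (2 * m)) / (3 * ((m : ℚ) + 1) * (2 * m + 3)) := by
    unfold Gf
    rw [show 2 * m - 2 * m = 0 by omega, cq_zero]
    ring
  rw [gm, cq_even_step m, cq_two, cq_zero]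
  unfold Mq
  have n1 : ((m : ℚ) + 1) ≠ 0 := by positivity
  have n2 : (2 * (m : ℚ) + 3) ≠ 0 := by positivity
  have n3 : (2 * (m : ℚ) + 2) ≠ 0 := by positivity
  field_simp
  ring

lemma Erec (m : ℕ) : ((m : ℚ) + 2) * Efun (m + 1) = 8 * (2 * (m : ℚ) + 1) * Efun m := by
  have hsplit : Efun (m + 1)
      = (∑ j ∈ range (m + 1), cq (2 * j) * cq (2 * m + 2 - 2 * j)) + cq (2 * m + 2) := by
    unfold Efun
    rw [sum_range_succ, show 2 * (m + 1) - 2 * (m + 1) = 0 by omega, cq_zero, mul_one,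
      show 2 * (m + 1) = 2 * m + 2 by omega]
  have tel : ∑ j ∈ range m, (Gf m (j + 1) - Gf m j) = Gf m m - Gf m 0 :=
    Finset.sum_range_sub _ _
  have G0 : Gf m 0 = 0 := by simp [Gf]
  have step : ∑ j ∈ range m,
      (((m : ℚ) + 2) * (cq (2 * j) * cq (2 * m + 2 - 2 * j))
        - 8 * (2 * (m : ℚ) + 1) * (cq (2 * j) * cq (2 * m - 2 * j))) = Gf m m := by
    rw [← sub_zero (Gf m m), ← G0, ← tel]
    refine sum_congr rfl fun j hj => ?_
    rw [mem_range] at hj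
    obtain ⟨k, hk⟩ : ∃ k, m = j + k + 1 := ⟨m - j - 1, by omega⟩
    subst hk
    rw [perj j k, show 2 * (j + k + 1) + 2 - 2 * j = 2 * k + 4 by omega,
      show 2 * (j + k + 1) - 2 * j = 2 * k + 2 by omega]
    push_cast
    ring
  have bnd := boundary m
  have split1 : (∑ j ∈ range (m + 1), cq (2 * j) * cq (2 * m + 2 - 2 * j))
      = (∑ j ∈ range m, cq (2 * j) * cq (2 * m + 2 - 2 * j)) + cq (2 * m) * cq 2 := by
    rw [sum_range_succ, show 2 * m + 2 - 2 * m = 2 by omega]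
  have split2 : Efun m = (∑ j ∈ range m, cq (2 * j) * cq (2 * m - 2 * j)) + cq (2 * m) * cq 0 := by
    unfold Efun
    rw [sum_range_succ, show 2 * m - 2 * m = 0 by omega]
  have combine : ∑ j ∈ range m,
      (((m : ℚ) + 2) * (cq (2 * j) * cq (2 * m + 2 - 2 * j))
        - 8 * (2 * (m : ℚ) + 1) * (cq (2 * j) * cq (2 * m - 2 * j)))
      = ((m : ℚ) + 2) * (∑ j ∈ range m, cq (2 * j) * cq (2 * m + 2 - 2 * j))
        - 8 * (2 * (m : ℚ) + 1) * (∑ j ∈ range m, cq (2 * j) * cq (2 * m - 2 * j)) := by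
    rw [sum_sub_distrib, mul_sum, mul_sum]
  rw [hsplit, split1, split2]
  linear_combination step + bnd - combine

/-- Shapiro's Catalan convolution. -/
lemma shapiro (m : ℕ) : Efun m = 4 ^ m * cq m := by
  induction m with
  | zero => simp [Efun]
  | succ m ih =>
    have h := Erec m
    rw [ih] at h
    have hm : ((m : ℚ) + 2) ≠ 0 := by positivity
    have h2 : ((m : ℚ) + 2) * (4 ^ (m + 1) * cq (m + 1))
        = 8 * (2 * (m : ℚ) + 1) * (4 ^ m * cq m) := by
      linear_combination (4 : ℚ) ^ (m + 1) * cq_step m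
    exact mul_left_cancel₀ hm (h.trans h2.symm)

lemma half (r : ℕ) :
    2 * ∑ w ∈ range (r + 1), cq (2 * w) * cq (2 * r + 1 - 2 * w) = cq (2 * r + 2) := by
  rw [even_split r]
  congr 1
  rw [← Finset.sum_range_reflect]
  unfold Xfun
  refine sum_congr rfl fun j hj => ?_
  rw [mem_range] at hj
  rw [show 2 * (r + 1 - 1 - j) = 2 * r - 2 * j by omega]
  rw [show 2 * r + 1 - (2 * r - 2 * j) = 2 * j + 1 by omega, mul_comm]

lemma pow_two_odd (k : ℕ) : (2 : ℚ) ^ (2 * k + 1) = 2 * 4 ^ k := by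
  rw [pow_succ, pow_mul]
  norm_num
  ring

lemma Asum (p : ℕ) :
    ∑ k ∈ range p, (2 : ℚ) ^ (2 * k + 1) * cq k * cq (2 * p - 2 * k - 1)
      = 4 ^ p * cq p - cq (2 * p) := by
  have h1 : ∑ k ∈ range p, (2 : ℚ) ^ (2 * k + 1) * cq k * cq (2 * p - 2 * k - 1)
      = ∑ k ∈ range p, ∑ u ∈ range (k + 1),
          2 * (cq (2 * u) * cq (2 * k - 2 * u) * cq (2 * p - 2 * k - 1)) := by
    refine sum_congr rfl fun k hk => ?_
    rw [pow_two_odd,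
      show (2 : ℚ) * 4 ^ k * cq k * cq (2 * p - 2 * k - 1)
        = 2 * ((4 ^ k * cq k) * cq (2 * p - 2 * k - 1)) from by ring, ← shapiro k]
    unfold Efun
    rw [Finset.sum_mul, Finset.mul_sum]
  rw [h1]
  simp only [range_eq_Ico]
  rw [← sum_Ico_Ico_comm 0 p
    (fun u k => 2 * (cq (2 * u) * cq (2 * k - 2 * u) * cq (2 * p - 2 * k - 1)))]
  have h2 : ∀ u ∈ Ico 0 p,
      (∑ k ∈ Ico u p, 2 * (cq (2 * u) * cq (2 * k - 2 * u) * cq (2 * p - 2 * k - 1)))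
        = cq (2 * u) * cq (2 * p - 2 * u) := by
    intro u hu
    rw [mem_Ico] at hu
    obtain ⟨r, hr⟩ : ∃ r, p = u + r + 1 := ⟨p - u - 1, by omega⟩
    subst hr
    rw [Finset.sum_Ico_eq_sum_range]
    rw [show u + r + 1 - u = r + 1 by omega]
    have h3 : ∀ w ∈ range (r + 1),
        2 * (cq (2 * u) * cq (2 * (u + w) - 2 * u) * cq (2 * (u + r + 1) - 2 * (u + w) - 1))
          = cq (2 * u) * (2 * (cq (2 * w) * cq (2 * r + 1 - 2 * w))) := by
      intro w hw
      rw [show 2 * (u + w) - 2 * u = 2 * w by omega,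
        show 2 * (u + r + 1) - 2 * (u + w) - 1 = 2 * r + 1 - 2 * w by omega]
      ring
    rw [sum_congr rfl h3, ← Finset.mul_sum, ← Finset.mul_sum, half r,
      show 2 * (u + r + 1) - 2 * u = 2 * r + 2 by omega]
  rw [sum_congr rfl h2, ← range_eq_Ico]
  have h4 : Efun p = (∑ u ∈ range p, cq (2 * u) * cq (2 * p - 2 * u)) + cq (2 * p) := by
    unfold Efun
    rw [sum_range_succ, show 2 * p - 2 * p = 0 by omega, cq_zero, mul_one]
  have h5 := shapiro p
  linarith [h4, h5]

lemma key_rat (p : ℕ) (hp : 1 ≤ p) :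
    cq (2 * p) - ∑ k ∈ range p,
        ((2 : ℚ) ^ (2 * k + 1) * cq k - cq (2 * k + 1)) * cq (2 * p - 2 * k - 1)
      = cq (2 * p + 1) + 2 * cq (2 * p) - 2 ^ (2 * p + 1) * cq p := by
  have hA := Asum p
  have hOd : Odf p = cq (2 * p + 1) - 4 ^ p * cq p := by
    have h := odd_split p
    rw [shapiro p] at h
    linarith
  have expand : ∑ k ∈ range p,
      ((2 : ℚ) ^ (2 * k + 1) * cq k - cq (2 * k + 1)) * cq (2 * p - 2 * k - 1)
      = (∑ k ∈ range p, (2 : ℚ) ^ (2 * k + 1) * cq k * cq (2 * p - 2 * k - 1)) - Odf p := by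
    have e : ∑ k ∈ range p,
        ((2 : ℚ) ^ (2 * k + 1) * cq k - cq (2 * k + 1)) * cq (2 * p - 2 * k - 1)
        = ∑ k ∈ range p, ((2 : ℚ) ^ (2 * k + 1) * cq k * cq (2 * p - 2 * k - 1)
            - cq (2 * k + 1) * cq (2 * p - 2 * k - 1)) :=
      sum_congr rfl fun k hk => by ring
    rw [e, sum_sub_distrib]
    rfl
  rw [expand, hA, hOd, pow_two_odd p]
  ring

theorem catalan_avoid_even02 (n : ℕ) (hn : 2 ≤ n) :
    (catalan (2 * n - 2) : ℤ) -
        ∑ i ∈ Finset.Icc 1 (n - 1),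
          ((2 : ℤ) ^ (2 * i - 1) * catalan (i - 1) - catalan (2 * i - 1)) *
            catalan (2 * n - 2 * i - 1) =
      catalan (2 * n - 1) + 2 * catalan (2 * n - 2) - 2 ^ (2 * n - 1) * catalan (n - 1) := by
  obtain ⟨p, hp, rfl⟩ : ∃ p, 1 ≤ p ∧ n = p + 1 := ⟨n - 1, by omega, by omega⟩
  rw [show 2 * (p + 1) - 2 = 2 * p by omega, show 2 * (p + 1) - 1 = 2 * p + 1 by omega,
    show p + 1 - 1 = p by omega]
  have hsum : ∑ i ∈ Finset.Icc 1 p,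
      ((2 : ℤ) ^ (2 * i - 1) * catalan (i - 1) - catalan (2 * i - 1)) *
        catalan (2 * (p + 1) - 2 * i - 1)
      = ∑ k ∈ range p,
        ((2 : ℤ) ^ (2 * k + 1) * catalan k - catalan (2 * k + 1)) * catalan (2 * p - 2 * k - 1) := by
    rw [← Finset.Ico_add_one_right_eq_Icc, Finset.sum_Ico_eq_sum_range]
    refine sum_congr rfl fun k hk => ?_
    rw [show 2 * (1 + k) - 1 = 2 * k + 1 by omega, show 1 + k - 1 = k by omega,
      show 2 * (p + 1) - 2 * (1 + k) - 1 = 2 * p - 2 * k - 1 by omega]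
  rw [hsum]
  have key := key_rat p hp
  unfold cq at key
  apply Int.cast_injective (α := ℚ)
  push_cast
  linear_combination key
end
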